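/- arXiv:0910.4850 — 3 statements merged into one kernel-verified Lean document; each statement's English description precedes it below -/
import Mathlib

section
/- Let α ∈ (-π/2, π/2) and k ∈ [0,1), and let U(α,k) = {w ∈ ℂ : |w - (1+e^{-2iα}k²)/(1-k²)| ≤ 2k·cos α/(1-k²)}. Then for nonzero w ∈ ℂ, 1/w ∈ U(-α,k) if and only if w ∈ U(α,k). -/
open Complex

/-- The disk `U(α,k)` from the paper. -/
def Udisk (α k : ℝ) : Set ℂ :=
  {w : ℂ | ‖w - (1 + Complex.exp (-2 * Complex.I * α) * k ^ 2) / (1 - k ^ 2)‖ ≤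
      2 * k * Real.cos α / (1 - k ^ 2)}

/-!
A circle with center `c` and radius `r` satisfying `‖c‖² = 1 + r²` meets the unit circle
orthogonally, so it is preserved by the reflection `w ↦ 1 / conj w` in the unit circle; hence
`w ↦ 1 / w` maps the disk `closedBall c r` onto its mirror image `closedBall (conj c) r`.
The centers of `U(α,k)` and `U(-α,k)` are conjugate, they have the same radius, and the center
of `U(α,k)` has squared modulus `1 + r²`.
-/

open ComplexConjugate

lemma norm_one_sub_conj_mul_sq (c w : ℂ) :
    ‖1 - conj c * w‖ ^ 2 + (1 - ‖c‖ ^ 2) * ‖w‖ ^ 2 = ‖w - c‖ ^ 2 + (1 - ‖c‖ ^ 2) := by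
  simp only [← normSq_eq_norm_sq, normSq_apply, sub_re, sub_im, mul_re, mul_im, conj_re,
    conj_im, one_re, one_im]
  ring

lemma inv_mem_closedBall_conj_iff {c : ℂ} {r : ℝ} (hc : ‖c‖ ^ 2 = 1 + r ^ 2) {w : ℂ}
    (hw : w ≠ 0) : w⁻¹ ∈ Metric.closedBall (conj c) r ↔ w ∈ Metric.closedBall c r := by
  rcases lt_or_ge r 0 with hr | hr
  · simp [Metric.closedBall_eq_empty.mpr hr]
  have hw' : 0 < ‖w‖ := norm_pos_iff.mpr hw
  have hinv : ‖w⁻¹ - conj c‖ = ‖1 - conj c * w‖ / ‖w‖ := by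
    rw [← norm_div, sub_div, mul_div_cancel_right₀ _ hw, one_div]
  have key := norm_one_sub_conj_mul_sq c w
  rw [hc] at key
  rw [Metric.mem_closedBall, Metric.mem_closedBall, dist_eq_norm, dist_eq_norm, hinv,
    div_le_iff₀ hw', ← sq_le_sq₀ (norm_nonneg _) (by positivity),
    ← sq_le_sq₀ (norm_nonneg _) hr, mul_pow]
  constructor <;> intro h <;> linarith

namespace Udisk

noncomputable def center (α k : ℝ) : ℂ := (1 + exp (-2 * I * α) * k ^ 2) / (1 - k ^ 2)

noncomputable def radius (α k : ℝ) : ℝ := 2 * k * Real.cos α / (1 - k ^ 2)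

lemma eq_closedBall (α k : ℝ) : Udisk α k = Metric.closedBall (center α k) (radius α k) := by
  ext w
  simp [Udisk, center, radius, dist_eq_norm]

lemma conj_center (α k : ℝ) : conj (center α k) = center (-α) k := by
  have hexp : conj (exp (-2 * I * α)) = exp (-2 * I * ↑(-α)) := by
    rw [← exp_conj]
    congr 1
    simp only [map_mul, map_neg, map_ofNat, conj_I, conj_ofReal, ofReal_neg]
    ring
  simp only [center, map_div₀, map_add, map_mul, map_sub, map_one, map_pow, conj_ofReal, hexp]

lemma radius_neg (α k : ℝ) : radius (-α) k = radius α k := by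
  simp only [radius, Real.cos_neg]

lemma norm_center_sq {k : ℝ} (hk : k ^ 2 ≠ 1) (α : ℝ) :
    ‖center α k‖ ^ 2 = 1 + radius α k ^ 2 := by
  have hk' : (1 : ℝ) - k ^ 2 ≠ 0 := sub_ne_zero.mpr (Ne.symm hk)
  have hnum : 1 + exp (-2 * I * α) * k ^ 2
      = ((1 + Real.cos (2 * α) * k ^ 2 : ℝ) : ℂ) + ((-Real.sin (2 * α) * k ^ 2 : ℝ) : ℂ) * I := by
    rw [show -2 * I * α = ((-(2 * α) : ℝ) : ℂ) * I by push_cast; ring, exp_mul_I,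
      ← ofReal_cos, ← ofReal_sin, Real.cos_neg, Real.sin_neg]
    push_cast
    ring
  have hden : (1 : ℂ) - (k : ℂ) ^ 2 = ((1 - k ^ 2 : ℝ) : ℂ) := by push_cast; ring
  rw [center, radius, ← normSq_eq_norm_sq, map_div₀, hnum, hden, normSq_ofReal,
    normSq_add_mul_I]
  field_simp
  linear_combination k ^ 4 * Real.sin_sq_add_cos_sq (2 * α) + 2 * k ^ 2 * Real.cos_two_mul α

end Udisk

theorem stmt_1_general (α k : ℝ)
    (hk0 : 0 ≤ k) (hk1 : k < 1) (w : ℂ) (hw : w ≠ 0) :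
    1 / w ∈ Udisk (-α) k ↔ w ∈ Udisk α k := by
  have hk : k ^ 2 ≠ 1 := by nlinarith
  rw [one_div, Udisk.eq_closedBall, Udisk.eq_closedBall, ← Udisk.conj_center, Udisk.radius_neg]
  exact inv_mem_closedBall_conj_iff (Udisk.norm_center_sq hk α) hw

theorem stmt_1 (α k : ℝ) (hα : α ∈ Set.Ioo (-(Real.pi / 2)) (Real.pi / 2))
    (hk0 : 0 ≤ k) (hk1 : k < 1) (w : ℂ) (hw : w ≠ 0) :
    1 / w ∈ Udisk (-α) k ↔ w ∈ Udisk α k :=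
  stmt_1_general α k hk0 hk1 w hw
end

section
/- Let α ∈ (-π/2, π/2), a = tan α, and let f be analytic on 𝔻 with f(0)=0, f'(0)=1. Suppose Re(e^{iα}·z f'(z)/f(z)) > 0 for all z ∈ 𝔻 \ {0} (f is α-spirallike). Then for the chain h(z,t) = e^{(1-ia)t} f(e^{iat}z) one has Re[ḣ(z,t)/(z h'(z,t))] > 0 for all z ∈ 𝔻 \ {0} and all t ≥ 0. -/
/-!
Put `w = e^{iat} z` and `Q = w f'(w) / f(w)`. Differentiating the chain gives
`ḣ / (z h') = (1 - ia) / Q + ia`, whose real part is `Re((1 + ia) Q) / |Q|²` because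
`1 - ia` is the conjugate of `1 + ia`. Since `e^{iα} = cos α (1 + ia)` with `cos α > 0`,
spirallikeness of `f` at `w ∈ 𝔻 \ {0}` says exactly that `Re((1 + ia) Q) > 0`.
-/

open Complex Metric

theorem exp_I_mul_ofReal_eq_cos_mul {α : ℝ} (hα : Real.cos α ≠ 0) :
    exp (I * α) = (Real.cos α : ℂ) * (1 + I * Real.tan α) := by
  have hcos : cos (α : ℂ) ≠ 0 := by exact_mod_cast hα
  rw [mul_comm I, exp_mul_I, Real.tan_eq_sin_div_cos, ofReal_div, ofReal_cos, ofReal_sin]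
  field_simp

theorem re_one_add_I_tan_mul_pos {α : ℝ} (hcos : 0 < Real.cos α)
    {Q : ℂ} (hQ : 0 < (exp (I * α) * Q).re) : 0 < ((1 + I * Real.tan α) * Q).re := by
  rw [exp_I_mul_ofReal_eq_cos_mul hcos.ne', mul_assoc, re_ofReal_mul] at hQ
  exact pos_of_mul_pos_right hQ hcos.le

theorem re_one_sub_I_mul_div_add_I_mul_pos {a : ℝ} {Q : ℂ} (hQ : 0 < ((1 + I * a) * Q).re) :
    0 < ((1 - I * a) / Q + I * a).re := by
  have hQ0 : Q ≠ 0 := by rintro rfl; simp at hQ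
  have hconj : ((1 - I * a) / Q).re = ((1 + I * a) * Q).re / normSq Q := by
    rw [div_re]
    simp only [mul_re, mul_im, sub_re, sub_im, add_re, add_im, one_re, one_im, I_re, I_im,
      ofReal_re, ofReal_im]
    ring
  rw [add_re, hconj]
  simpa using div_pos hQ (normSq_pos.2 hQ0)

section Chain

variable {f : ℂ → ℂ} {b c z : ℂ} {t : ℝ}

theorem hasDerivAt_exp_mul_comp_exp_mul_time (hf : DifferentiableAt ℂ f (exp (c * t) * z)) :
    HasDerivAt (fun s : ℝ => exp (b * s) * f (exp (c * s) * z))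
      (exp (b * t) * (b * f (exp (c * t) * z) +
        c * (exp (c * t) * z) * deriv f (exp (c * t) * z))) t := by
  have hexp : ∀ d : ℂ, HasDerivAt (fun x : ℂ => exp (d * x)) (exp (d * t) * d) t := fun d => by
    simpa using ((hasDerivAt_id (t : ℂ)).const_mul d).cexp
  have hf' := hf.hasDerivAt.comp (t : ℂ) ((hexp c).mul_const z)
  convert ((hexp b).mul hf').comp_ofReal using 1
  · ext s
    simp
  · simp only [Function.comp_apply]
    ring

theorem hasDerivAt_exp_mul_comp_exp_mul_space (hf : DifferentiableAt ℂ f (exp (c * t) * z)) :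
    HasDerivAt (fun y : ℂ => exp (b * t) * f (exp (c * t) * y))
      (exp (b * t) * (deriv f (exp (c * t) * z) * exp (c * t))) z := by
  have hlin : HasDerivAt (fun y : ℂ => exp (c * t) * y) (exp (c * t)) z := by
    simpa using (hasDerivAt_id z).const_mul (exp (c * t))
  exact (hf.hasDerivAt.comp z hlin).const_mul _

theorem deriv_time_div_mul_deriv_space_eq (hf : DifferentiableAt ℂ f (exp (c * t) * z))
    (hz : z ≠ 0) (hf'w : deriv f (exp (c * t) * z) ≠ 0) :
    deriv (fun s : ℝ => exp (b * s) * f (exp (c * s) * z)) t /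
        (z * deriv (fun y : ℂ => exp (b * t) * f (exp (c * t) * y)) z) =
      b / (exp (c * t) * z * deriv f (exp (c * t) * z) / f (exp (c * t) * z)) + c := by
  rw [(hasDerivAt_exp_mul_comp_exp_mul_time hf).deriv,
    (hasDerivAt_exp_mul_comp_exp_mul_space hf).deriv]
  have := exp_ne_zero (c * t)
  generalize exp (c * t) = e at *
  generalize f (e * z) = v at *
  generalize deriv f (e * z) = d at *
  field_simp

end Chain

theorem stmt_8_general (α : ℝ) (hα : α ∈ Set.Ioo (-(Real.pi / 2)) (Real.pi / 2))
    (a : ℝ) (ha : a = Real.tan α)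
    (f : ℂ → ℂ) (hf : DifferentiableOn ℂ f (ball (0 : ℂ) 1))
    (hspiral : ∀ z ∈ ball (0 : ℂ) 1, z ≠ 0 →
      0 < (Complex.exp (Complex.I * α) * (z * deriv f z / f z)).re) :
    ∀ z ∈ ball (0 : ℂ) 1, z ≠ 0 → ∀ t : ℝ, 0 ≤ t →
      0 < (deriv (fun s : ℝ => Complex.exp ((1 - Complex.I * a) * s) *
            f (Complex.exp (Complex.I * a * s) * z)) t /
          (z * deriv (fun w => Complex.exp ((1 - Complex.I * a) * t) *
            f (Complex.exp (Complex.I * a * t) * w)) z)).re := by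
  intro z hz hz0 t _
  set w := exp (I * a * t) * z
  have hw_ball : w ∈ ball (0 : ℂ) 1 := by
    simpa [w, norm_exp] using hz
  have hQ := hspiral w hw_ball (mul_ne_zero (exp_ne_zero _) hz0)
  have hf'w : deriv f w ≠ 0 := fun h => by simp [h] at hQ
  rw [deriv_time_div_mul_deriv_space_eq (hf.differentiableAt (isOpen_ball.mem_nhds hw_ball))
    hz0 hf'w]
  subst ha
  exact re_one_sub_I_mul_div_add_I_mul_pos
    (re_one_add_I_tan_mul_pos (Real.cos_pos_of_mem_Ioo hα) hQ)

theorem stmt_8 (α : ℝ) (hα : α ∈ Set.Ioo (-(Real.pi / 2)) (Real.pi / 2))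
    (a : ℝ) (ha : a = Real.tan α)
    (f : ℂ → ℂ) (hf : DifferentiableOn ℂ f (ball (0 : ℂ) 1))
    (hf0 : f 0 = 0) (hf'0 : deriv f 0 = 1)
    (hspiral : ∀ z ∈ ball (0 : ℂ) 1, z ≠ 0 →
      0 < (Complex.exp (Complex.I * α) * (z * deriv f z / f z)).re) :
    ∀ z ∈ ball (0 : ℂ) 1, z ≠ 0 → ∀ t : ℝ, 0 ≤ t →
      0 < (deriv (fun s : ℝ => Complex.exp ((1 - Complex.I * a) * s) *
            f (Complex.exp (Complex.I * a * s) * z)) t /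
          (z * deriv (fun w => Complex.exp ((1 - Complex.I * a) * t) *
            f (Complex.exp (Complex.I * a * t) * w)) z)).re :=
  stmt_8_general α hα a ha f hf hspiral
end

section
/- Let f be analytic on 𝔻 with f(0)=0, f'(0)=1, convex (Re(1 + z f''/f') > 0 on 𝔻), and let α ∈ ℂ with |2α-1| ≤ 1, α ≠ 1. Define f_t(z) = α f(z) + e^t (1-α) z f'(z) for t ≥ 0. Then for all z ∈ 𝔻 \ {0} and t ≥ 0 with f_t'(z) ≠ 0: Re[ z f_t'(z) / ḟ_t(z) ] > 0, where z f_t'(z)/ḟ_t(z) = (1/e^t)·α/(1-α) + 1 + z f''(z)/f'(z). -/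
/-! Since `ḟ_t(z) = e^t (1-α) z f'(z)` and `z f_t'(z) = α z f'(z) + e^t (1-α) z (f'(z) + z f''(z))`,
the identity is algebra once `f'(z) ≠ 0`. Its real part is positive because
`Re (α / (1-α)) = (Re α - |α|²) / |1-α|² ≥ 0` exactly when `|2α-1| ≤ 1`.

The convexity hypothesis forces `f' ≠ 0` on `𝔻` (at a zero the quotient `z f''/f'` is a junk `0`,
so this is not automatic): if `f'` vanishes to order `n ≥ 1` at `z₀ ≠ 0`, then
`(z - z₀) f''(z)/f'(z) → n`, so `Re (z f''(z)/f'(z)) → -∞` along the radius `z = (1-ε) z₀`. -/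

open Complex Metric Filter Topology

theorem AnalyticAt.tendsto_sub_mul_logDeriv {𝕜 : Type*} [NontriviallyNormedField 𝕜]
    [CompleteSpace 𝕜] {g : 𝕜 → 𝕜} {x : 𝕜} {n : ℕ} (hg : AnalyticAt 𝕜 g x)
    (hn : analyticOrderAt g x = n) :
    Tendsto (fun w => (w - x) * logDeriv g w) (𝓝[≠] x) (𝓝 n) := by
  obtain ⟨h, hh, hhx, hgh⟩ := hg.analyticOrderAt_eq_natCast.mp hn
  have hlim : Tendsto (fun w => (n : 𝕜) + (w - x) * logDeriv h w) (𝓝[≠] x) (𝓝 n) := by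
    have hcont : ContinuousAt (fun w => (n : 𝕜) + (w - x) * logDeriv h w) x :=
      continuousAt_const.add ((continuousAt_id.sub continuousAt_const).mul
        (hh.deriv.continuousAt.div hh.continuousAt hhx))
    simpa using hcont.tendsto.mono_left nhdsWithin_le_nhds
  refine hlim.congr' ?_
  filter_upwards [eventually_nhdsWithin_of_eventually_nhds hgh.eventually_nhds,
    eventually_nhdsWithin_of_eventually_nhds hh.eventually_analyticAt,
    eventually_nhdsWithin_of_eventually_nhds (hh.continuousAt.eventually_ne hhx),
    self_mem_nhdsWithin] with w hgw hhw hw0 (hwx : w ≠ x)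
  have hwx' : w - x ≠ 0 := sub_ne_zero.mpr hwx
  simp only [smul_eq_mul] at hgw
  rw [(logDeriv_congr_nhds hgw).eq_of_nhds, logDeriv_mul (f := fun u => (u - x) ^ n) w
    (pow_ne_zero n hwx') hw0 (by fun_prop) hhw.differentiableAt, logDeriv_fun_pow (by fun_prop)]
  simp only [logDeriv_apply, deriv_sub_const, deriv_id'']
  field_simp

theorem tendsto_one_sub_mul_nhdsGT_zero (z₀ : ℂ) :
    Tendsto (fun ε : ℝ => (1 - ε) * z₀) (𝓝[>] 0) (𝓝 z₀) := by
  have : Continuous (fun ε : ℝ => (1 - ε) * z₀) := by fun_prop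
  simpa using this.continuousWithinAt.tendsto (x := 0) (s := Set.Ioi 0)

theorem AnalyticAt.tendsto_re_mul_logDeriv_atBot {g : ℂ → ℂ} {z₀ : ℂ} (hg : AnalyticAt ℂ g z₀)
    (hz₀ : z₀ ≠ 0) (hgz₀ : g z₀ = 0) (hord : analyticOrderAt g z₀ ≠ ⊤) :
    Tendsto (fun ε : ℝ => ((1 - ε) * z₀ * logDeriv g ((1 - ε) * z₀)).re) (𝓝[>] 0) atBot := by
  lift analyticOrderAt g z₀ to ℕ using hord with n hn
  have hn0 : 0 < n := by
    have := hg.analyticOrderAt_ne_zero.mpr hgz₀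
    rw [← hn] at this
    exact Nat.pos_of_ne_zero (mod_cast this)
  have hpath : Tendsto (fun ε : ℝ => (1 - ε) * z₀) (𝓝[>] 0) (𝓝[≠] z₀) := by
    refine tendsto_nhdsWithin_of_tendsto_nhds_of_eventually_within _
      (tendsto_one_sub_mul_nhdsGT_zero z₀) ?_
    filter_upwards [self_mem_nhdsWithin] with ε (hε : 0 < ε)
    simp [sub_mul, hz₀, hε.ne']
  have hres := (continuous_re.tendsto _).comp
    ((hg.tendsto_sub_mul_logDeriv hn.symm).comp hpath)
  have hscale : Tendsto (fun ε : ℝ => 1 - ε⁻¹) (𝓝[>] 0) atBot := by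
    simpa [sub_eq_add_neg] using tendsto_atBot_add_const_left _ 1
      (tendsto_neg_atTop_atBot.comp tendsto_inv_nhdsGT_zero)
  refine (hscale.atBot_mul_pos (by exact_mod_cast hn0) hres).congr' ?_
  filter_upwards [self_mem_nhdsWithin] with ε (hε : 0 < ε)
  have hε' : (ε : ℂ) ≠ 0 := by exact_mod_cast hε.ne'
  have : (1 - ε) * z₀ * logDeriv g ((1 - ε) * z₀)
      = ((1 - ε⁻¹ : ℝ) : ℂ) * (((1 - ε) * z₀ - z₀) * logDeriv g ((1 - ε) * z₀)) := by
    push_cast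
    field_simp
    ring
  simp [this]

theorem AnalyticOnNhd.ne_zero_of_re_mul_logDeriv_bddBelow {g : ℂ → ℂ} {U : Set ℂ}
    (hg : AnalyticOnNhd ℂ g U) (hUo : IsOpen U) (hUc : IsPreconnected U) {z₁ : ℂ} (hz₁ : z₁ ∈ U)
    (hgz₁ : g z₁ ≠ 0) {C : ℝ} (hC : ∀ z ∈ U, C ≤ (z * logDeriv g z).re) {z₀ : ℂ} (hz₀U : z₀ ∈ U)
    (hz₀ : z₀ ≠ 0) : g z₀ ≠ 0 := by
  intro hgz₀
  have hord : analyticOrderAt g z₀ ≠ ⊤ :=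
    hg.analyticOrderAt_ne_top_of_isPreconnected hUc hz₁ hz₀U
      (by simp [(hg z₁ hz₁).analyticOrderAt_eq_zero.mpr hgz₁])
  obtain ⟨ε, hlt, hmem⟩ := (((hg z₀ hz₀U).tendsto_re_mul_logDeriv_atBot hz₀ hgz₀ hord).eventually
    (eventually_lt_atBot C) |>.and
      ((tendsto_one_sub_mul_nhdsGT_zero z₀).eventually (hUo.mem_nhds hz₀U))).exists
  exact (hC _ hmem).not_gt hlt

theorem re_div_one_sub_nonneg_of_norm_two_mul_sub_one_le {α : ℂ} (hα : ‖2 * α - 1‖ ≤ 1) :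
    0 ≤ (α / (1 - α)).re := by
  have hsq : normSq (2 * α - 1) ≤ 1 := by
    rw [normSq_eq_norm_sq]; nlinarith [norm_nonneg (2 * α - 1)]
  have hα' : α.re ^ 2 + α.im ^ 2 ≤ α.re := by
    simp only [normSq_apply, sub_re, sub_im, mul_re, mul_im, one_re, one_im, re_ofNat,
      im_ofNat] at hsq
    nlinarith
  rw [div_re, ← add_div]
  apply div_nonneg _ (normSq_nonneg _)
  simp only [sub_re, sub_im, one_re, one_im]
  nlinarith

theorem deriv_const_mul_add_const_mul_id_mul_deriv {f : ℂ → ℂ} {z : ℂ} (a c : ℂ)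
    (hf : DifferentiableAt ℂ f z) (hf' : DifferentiableAt ℂ (deriv f) z) :
    deriv (fun w => a * f w + c * w * deriv f w) z
      = a * deriv f z + c * (deriv f z + z * deriv (deriv f) z) := by
  have hc : HasDerivAt (fun w => c * w) c z := by simpa using (hasDerivAt_id z).const_mul c
  exact ((hf.hasDerivAt.const_mul a).add (hc.mul hf'.hasDerivAt)).deriv.trans (by ring)

theorem deriv_const_add_exp_mul {t : ℝ} (a b : ℂ) :
    deriv (fun s : ℝ => a + (Real.exp s : ℂ) * b) t = Real.exp t * b := by
  simpa using ((Real.hasDerivAt_exp t).ofReal_comp.mul_const b).const_add a |>.deriv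

theorem stmt_18_general (f : ℂ → ℂ) (hf : DifferentiableOn ℂ f (ball (0 : ℂ) 1))
    (hf'0 : deriv f 0 = 1)
    (hconv : ∀ z ∈ ball (0 : ℂ) 1, 0 < (1 + z * deriv (deriv f) z / deriv f z).re)
    (α : ℂ) (hα : ‖2 * α - 1‖ ≤ 1) (hα1 : α ≠ 1) :
    ∀ z ∈ ball (0 : ℂ) 1, z ≠ 0 → ∀ t : ℝ, 0 ≤ t →
      deriv (fun w => α * f w + (Real.exp t : ℂ) * (1 - α) * w * deriv f w) z ≠ 0 →
      (z * deriv (fun w => α * f w + (Real.exp t : ℂ) * (1 - α) * w * deriv f w) z /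
          deriv (fun s : ℝ => α * f z + (Real.exp s : ℂ) * (1 - α) * z * deriv f z) t =
        ((Real.exp t : ℂ))⁻¹ * (α / (1 - α)) + 1 + z * deriv (deriv f) z / deriv f z) ∧
      0 < (z * deriv (fun w => α * f w + (Real.exp t : ℂ) * (1 - α) * w * deriv f w) z /
          deriv (fun s : ℝ => α * f z + (Real.exp s : ℂ) * (1 - α) * z * deriv f z) t).re := by
  intro z hz hz0 t _ _
  have hA : AnalyticOnNhd ℂ f (ball 0 1) := hf.analyticOnNhd isOpen_ball
  have hbdd : ∀ w ∈ ball (0 : ℂ) 1, -1 ≤ (w * logDeriv (deriv f) w).re := fun w hw => by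
    have := hconv w hw
    rw [add_re, one_re, mul_div_assoc] at this
    rw [logDeriv_apply]
    linarith
  have hf'z : deriv f z ≠ 0 :=
    hA.deriv.ne_zero_of_re_mul_logDeriv_bddBelow isOpen_ball (convex_ball 0 1).isPreconnected
      (mem_ball_self one_pos) (by simp [hf'0]) hbdd hz hz0
  have hα1' : (1 : ℂ) - α ≠ 0 := sub_ne_zero.mpr (Ne.symm hα1)
  have het : (Real.exp t : ℂ) ≠ 0 := by exact_mod_cast (Real.exp_pos t).ne'
  have hquot : z * deriv (fun w => α * f w + (Real.exp t : ℂ) * (1 - α) * w * deriv f w) z /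
      deriv (fun s : ℝ => α * f z + (Real.exp s : ℂ) * (1 - α) * z * deriv f z) t =
      ((Real.exp t : ℂ))⁻¹ * (α / (1 - α)) + 1 + z * deriv (deriv f) z / deriv f z := by
    have htime : deriv (fun s : ℝ => α * f z + (Real.exp s : ℂ) * (1 - α) * z * deriv f z) t
        = Real.exp t * ((1 - α) * z * deriv f z) := by
      simp only [mul_assoc (Real.exp _ : ℂ)]
      exact deriv_const_add_exp_mul _ _
    rw [htime, deriv_const_mul_add_const_mul_id_mul_deriv _ _ (hA z hz).differentiableAt
      (hA.deriv z hz).differentiableAt]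
    field_simp
    ring
  refine ⟨hquot, ?_⟩
  rw [hquot, add_assoc, add_re, ← ofReal_inv, re_ofReal_mul]
  exact add_pos_of_nonneg_of_pos
    (mul_nonneg (by positivity) (re_div_one_sub_nonneg_of_norm_two_mul_sub_one_le hα)) (hconv z hz)

theorem stmt_18 (f : ℂ → ℂ) (hf : DifferentiableOn ℂ f (ball (0 : ℂ) 1))
    (hf0 : f 0 = 0) (hf'0 : deriv f 0 = 1)
    (hconv : ∀ z ∈ ball (0 : ℂ) 1, 0 < (1 + z * deriv (deriv f) z / deriv f z).re)
    (α : ℂ) (hα : ‖2 * α - 1‖ ≤ 1) (hα1 : α ≠ 1) :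
    ∀ z ∈ ball (0 : ℂ) 1, z ≠ 0 → ∀ t : ℝ, 0 ≤ t →
      deriv (fun w => α * f w + (Real.exp t : ℂ) * (1 - α) * w * deriv f w) z ≠ 0 →
      (z * deriv (fun w => α * f w + (Real.exp t : ℂ) * (1 - α) * w * deriv f w) z /
          deriv (fun s : ℝ => α * f z + (Real.exp s : ℂ) * (1 - α) * z * deriv f z) t =
        ((Real.exp t : ℂ))⁻¹ * (α / (1 - α)) + 1 + z * deriv (deriv f) z / deriv f z) ∧
      0 < (z * deriv (fun w => α * f w + (Real.exp t : ℂ) * (1 - α) * w * deriv f w) z /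
          deriv (fun s : ℝ => α * f z + (Real.exp s : ℂ) * (1 - α) * z * deriv f z) t).re :=
  stmt_18_general f hf hf'0 hconv α hα hα1
end
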